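/- (Stability of the 1D locally implicit ADER-DG scheme.) Consider the periodic 1D scheme with K ≥ 1 elements, CFL number ν with 0 ≤ ν ≤ 1, and previous-step data g_k, with predictors q̃_k and correctors q_k; assume each predictor matches the previous solution at the beginning of the time step, i.e. q̃_k(ξ, −1) = g_k(ξ) for all ξ ∈ ℝ. For each k set ψ_k := q_k − q̃_k, and define vectors γ_k, β_k ∈ ℝ^{p+1} by (γ_k)_i = ψ_k(ξ_i, 1) and (β_k)_j = q̃_{k−1}(1, ξ_j) − q̃_k(−1, ξ_j). Suppose there exists a linear map A : ℝ^{p+1} → ℝ^{p+1} such that γ_k = ν A β_k for every k, and such that ‖A v‖_w ≤ ‖v‖_w for all v ∈ ℝ^{p+1}, where ‖v‖_w := (∑_{i=0}^{p} w_i v_i²)^{1/2} is the quadrature-weighted norm. Then the scheme is numerically stable: ∑_{k} ∑_{i} w_i ½ q_k(ξ_i, 1)² ≤ ∑_{k} ∑_{i} w_i ½ g_k(ξ_i)², i.e. the total discrete energy does not increase over the time step. -/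

import Mathlib

open BigOperators MvPolynomial

/-- Evaluation of a bivariate polynomial `Q` at the point `(x, t)`; variable `0` is the
space coordinate `ξ` and variable `1` is the time coordinate `τ`. -/
noncomputable def ev (Q : MvPolynomial (Fin 2) ℝ) (x t : ℝ) : ℝ :=
  MvPolynomial.eval ![x, t] Q

/-- `Vp p` is the space of real polynomial functions of `(ξ, τ)` of degree at most `p`
in each variable separately. -/
def Vp (p : ℕ) : Set (MvPolynomial (Fin 2) ℝ) :=
  {Q | Q.degreeOf 0 ≤ p ∧ Q.degreeOf 1 ≤ p}

/-- Discrete volume integral `⟨f⟩ = ∑ i j, w i * w j * f (ξ i) (ξ j)`. -/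
noncomputable def dVol {p : ℕ} (ξ w : Fin (p + 1) → ℝ) (f : ℝ → ℝ → ℝ) : ℝ :=
  ∑ i, ∑ j, w i * w j * f (ξ i) (ξ j)

/-- Discrete temporal-boundary integral `⟨f⟩_{τ=s} = ∑ i, w i * f (ξ i) s`. -/
noncomputable def dT {p : ℕ} (ξ w : Fin (p + 1) → ℝ) (f : ℝ → ℝ → ℝ) (s : ℝ) : ℝ :=
  ∑ i, w i * f (ξ i) s

/-- Discrete spatial-boundary integral `⟨f⟩_{ξ=s} = ∑ j, w j * f s (ξ j)`. -/
noncomputable def dX {p : ℕ} (ξ w : Fin (p + 1) → ℝ) (f : ℝ → ℝ → ℝ) (s : ℝ) : ℝ :=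
  ∑ j, w j * f s (ξ j)

/-- `q̃ ∈ V_p` satisfies the predictor equation with data `g` (a univariate polynomial
in `ξ`) and CFL number `ν` if for every `φ ∈ V_p`:
`⟨φ·(∂q̃/∂τ + ν ∂q̃/∂ξ)⟩ + ⟨φ·(q̃ − g)⟩_{τ=−1} = 0`. -/
def PredictorEq {p : ℕ} (ξ w : Fin (p + 1) → ℝ) (ν : ℝ) (g : Polynomial ℝ)
    (qt : MvPolynomial (Fin 2) ℝ) : Prop :=
  ∀ φ ∈ Vp p,
    dVol ξ w (fun x t => ev φ x t *
        (ev (pderiv 1 qt) x t + ν * ev (pderiv 0 qt) x t)) +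
      dT ξ w (fun x t => ev φ x t * (ev qt x t - g.eval x)) (-1) = 0

/-- `q ∈ V_p` satisfies the corrector equation with data `g` (a univariate polynomial
in `ξ`), left-flux trace `a` and right-flux trace `b` (univariate polynomials in `τ`)
and CFL number `ν` if for every `φ ∈ V_p`:
`⟨φ·(∂q/∂τ + ν ∂q/∂ξ)⟩ + ⟨φ·(q − g)⟩_{τ=−1} + ν ⟨φ·(b − q)⟩_{ξ=1} − ν ⟨φ·(a − q)⟩_{ξ=−1} = 0`. -/
def CorrectorEq {p : ℕ} (ξ w : Fin (p + 1) → ℝ) (ν : ℝ) (g a b : Polynomial ℝ)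
    (q : MvPolynomial (Fin 2) ℝ) : Prop :=
  ∀ φ ∈ Vp p,
    dVol ξ w (fun x t => ev φ x t *
        (ev (pderiv 1 q) x t + ν * ev (pderiv 0 q) x t)) +
      dT ξ w (fun x t => ev φ x t * (ev q x t - g.eval x)) (-1) +
      ν * dX ξ w (fun x t => ev φ x t * (b.eval t - ev q x t)) 1 -
      ν * dX ξ w (fun x t => ev φ x t * (a.eval t - ev q x t)) (-1) = 0

/-- The trace `τ ↦ Q(1, τ)` of a bivariate polynomial on the right spatial boundary
`ξ = 1`, as a univariate polynomial in `τ`. -/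
noncomputable def traceRight (Q : MvPolynomial (Fin 2) ℝ) : Polynomial ℝ :=
  MvPolynomial.eval₂ (Polynomial.C : ℝ →+* Polynomial ℝ) ![(1 : Polynomial ℝ), Polynomial.X] Q

/-!
Write `‖v‖²` for the weighted nodal norm `∑ i, w i * v i ^ 2`. Since the rule is exact up to
degree `2p - 1`, it integrates `∂(Q²)/2 = Q ∂Q` exactly for `Q ∈ V_p`, so the volume term of the
weak form tested with the solution itself reduces to boundary terms (summation by parts). Testing
the corrector equation with `q` gives one energy identity. Subtracting the predictor equation
turns the corrector equation into another corrector equation, for `ψ = q - q̃`, with data `0`,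
left trace `q̃_{k-1}(1, ·) - q̃_k(-1, ·)` and right trace `0`; testing that one with `ψ` and
using `q̃(·, -1) = g` gives the per-element balance
`‖q_k(·, 1)‖² = ‖g_k‖² + ν (‖a_k‖² - ‖b_k‖²) + (‖γ_k‖² - ν ‖β_k‖²)` on the nodes, where
`a_k = q̃_{k-1}(1, ·)` and `b_k = q̃_k(1, ·)` are the flux traces. The bracket is `≤ 0` because `γ_k = ν A β_k` with `A` a contraction and `ν² ≤ ν`, and the flux
terms telescope around the periodic mesh because `a_k = b_{k-1}`.
-/

def QuadratureExact {ι : Type*} [Fintype ι] (d : ℕ) (ξ w : ι → ℝ) : Prop :=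
  ∀ f : Polynomial ℝ, f.natDegree ≤ d → ∑ i, w i * f.eval (ξ i) = ∫ x in (-1 : ℝ)..1, f.eval x

def wNormSq {ι : Type*} [Fintype ι] (w v : ι → ℝ) : ℝ :=
  ∑ i, w i * v i ^ 2

section WeightedNorm

variable {ι : Type*} [Fintype ι] {w : ι → ℝ}

theorem wNormSq_nonneg (hw : ∀ i, 0 ≤ w i) (v : ι → ℝ) : 0 ≤ wNormSq w v :=
  Finset.sum_nonneg fun i _ => mul_nonneg (hw i) (sq_nonneg _)

theorem wNormSq_smul (c : ℝ) (v : ι → ℝ) : wNormSq w (c • v) = c ^ 2 * wNormSq w v := by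
  simp only [wNormSq, Finset.mul_sum, Pi.smul_apply, smul_eq_mul]
  exact Finset.sum_congr rfl fun i _ => by ring

theorem wNormSq_smul_le (hw : ∀ i, 0 ≤ w i) {u v : ι → ℝ} (huv : wNormSq w u ≤ wNormSq w v)
    {ν : ℝ} (hν0 : 0 ≤ ν) (hν1 : ν ≤ 1) : wNormSq w (ν • u) ≤ ν * wNormSq w v := by
  rw [wNormSq_smul]
  calc ν ^ 2 * wNormSq w u ≤ ν ^ 2 * wNormSq w v := by gcongr
    _ ≤ ν * wNormSq w v := mul_le_mul_of_nonneg_right (by nlinarith) (wNormSq_nonneg hw v)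

theorem wNormSq_div_two (v : ι → ℝ) : wNormSq w v / 2 = ∑ i, w i * (1 / 2 * v i ^ 2) := by
  rw [wNormSq, Finset.sum_div]
  exact Finset.sum_congr rfl fun i _ => by ring

end WeightedNorm

noncomputable def slice (n : Fin 2) (c : ℝ) (Q : MvPolynomial (Fin 2) ℝ) : Polynomial ℝ :=
  aeval (fun i => if i = n then Polynomial.X else Polynomial.C c) Q

theorem eval_slice (n : Fin 2) (c s : ℝ) (Q : MvPolynomial (Fin 2) ℝ) :
    (slice n c Q).eval s = MvPolynomial.eval (fun i => if i = n then s else c) Q := by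
  rw [slice, ← Polynomial.coe_aeval_eq_eval, comp_aeval_apply]
  change MvPolynomial.eval _ Q = _
  congr 2
  funext i
  split_ifs <;> simp

theorem eval_slice_zero (c x : ℝ) (Q : MvPolynomial (Fin 2) ℝ) :
    (slice 0 c Q).eval x = ev Q x c := by
  rw [eval_slice, ev]
  congr 2
  funext i
  fin_cases i <;> simp

theorem eval_slice_one (c t : ℝ) (Q : MvPolynomial (Fin 2) ℝ) :
    (slice 1 c Q).eval t = ev Q c t := by
  rw [eval_slice, ev]
  congr 2
  funext i
  fin_cases i <;> simp

theorem traceRight_eq_slice (Q : MvPolynomial (Fin 2) ℝ) : traceRight Q = slice 1 1 Q := by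
  rw [traceRight, slice, aeval_def, Polynomial.algebraMap_eq]
  congr 1
  funext i
  fin_cases i <;> simp

theorem eval_traceRight (Q : MvPolynomial (Fin 2) ℝ) (t : ℝ) :
    (traceRight Q).eval t = ev Q 1 t := by
  rw [traceRight_eq_slice, eval_slice_one]

theorem natDegree_slice_le (n : Fin 2) (c : ℝ) (Q : MvPolynomial (Fin 2) ℝ) :
    (slice n c Q).natDegree ≤ Q.degreeOf n := by
  rw [slice, aeval_def, eval₂_eq']
  refine Polynomial.natDegree_sum_le_of_forall_le _ _ fun d hd => ?_
  calc _ ≤ (∏ i, (if i = n then Polynomial.X else Polynomial.C c) ^ d i).natDegree :=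
        Polynomial.natDegree_C_mul_le _ _
    _ ≤ ∑ i, ((if i = n then Polynomial.X else Polynomial.C c) ^ d i).natDegree :=
        Polynomial.natDegree_prod_le _ _
    _ = d n := by fin_cases n <;> simp [Fin.sum_univ_two]
    _ ≤ Q.degreeOf n := monomial_le_degreeOf n hd

theorem derivative_slice (n : Fin 2) (c : ℝ) (Q : MvPolynomial (Fin 2) ℝ) :
    Polynomial.derivative (slice n c Q) = slice n c (pderiv n Q) := by
  induction Q using MvPolynomial.induction_on with
  | C a => simp [slice]
  | add f g hf hg => simp only [slice, map_add] at *; rw [hf, hg]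
  | mul_X f i hf =>
    simp only [slice, map_mul, aeval_X, Derivation.leibniz, pderiv_X, Polynomial.derivative_mul,
      smul_eq_mul, map_add, hf] at *
    split_ifs with h <;> simp [h] <;> ring

theorem sub_mem_Vp {p : ℕ} {P Q : MvPolynomial (Fin 2) ℝ} (hP : P ∈ Vp p) (hQ : Q ∈ Vp p) :
    P - Q ∈ Vp p :=
  ⟨(degreeOf_sub_le 0 P Q).trans (max_le hP.1 hQ.1),
    (degreeOf_sub_le 1 P Q).trans (max_le hP.2 hQ.2)⟩

theorem ev_sub (P Q : MvPolynomial (Fin 2) ℝ) (x t : ℝ) :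
    ev (P - Q) x t = ev P x t - ev Q x t :=
  map_sub _ P Q

theorem integral_eval_derivative (P : Polynomial ℝ) (a b : ℝ) :
    ∫ x in a..b, P.derivative.eval x = P.eval b - P.eval a :=
  intervalIntegral.integral_eq_sub_of_hasDerivAt (fun x _ => P.hasDerivAt x)
    (P.derivative.continuous.intervalIntegrable a b)

theorem sum_mul_derivative_of_quadratureExact {ι : Type*} [Fintype ι] {p : ℕ} {ξ w : ι → ℝ}
    (hquad : QuadratureExact (2 * p - 1) ξ w) {F : Polynomial ℝ} (hF : F.natDegree ≤ p) :
    ∑ i, w i * (F.eval (ξ i) * F.derivative.eval (ξ i)) =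
      (F.eval 1 ^ 2 - F.eval (-1) ^ 2) / 2 := by
  have hdeg : (F ^ 2).derivative.natDegree ≤ 2 * p - 1 :=
    (Polynomial.natDegree_derivative_le _).trans
      (Nat.sub_le_sub_right ((Polynomial.natDegree_pow_le_of_le 2 hF).trans (by omega)) 1)
  calc _ = (∑ i, w i * (F ^ 2).derivative.eval (ξ i)) / 2 := by
        rw [Finset.sum_div]
        refine Finset.sum_congr rfl fun i _ => ?_
        simp only [Polynomial.derivative_sq, Polynomial.eval_mul, Polynomial.eval_C]
        ring
    _ = _ := by
        rw [hquad _ hdeg, integral_eval_derivative, Polynomial.eval_pow, Polynomial.eval_pow]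

section SpaceTime

variable {p : ℕ} {ξ w : Fin (p + 1) → ℝ} {ν : ℝ}

theorem sum_mul_pderiv_time (hquad : QuadratureExact (2 * p - 1) ξ w)
    {Q : MvPolynomial (Fin 2) ℝ} (hQ : Q ∈ Vp p) (x : ℝ) :
    ∑ j, w j * (ev Q x (ξ j) * ev (pderiv 1 Q) x (ξ j)) =
      (ev Q x 1 ^ 2 - ev Q x (-1) ^ 2) / 2 := by
  simpa only [derivative_slice, eval_slice_one] using
    sum_mul_derivative_of_quadratureExact hquad ((natDegree_slice_le 1 x Q).trans hQ.2)

theorem sum_mul_pderiv_space (hquad : QuadratureExact (2 * p - 1) ξ w)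
    {Q : MvPolynomial (Fin 2) ℝ} (hQ : Q ∈ Vp p) (t : ℝ) :
    ∑ i, w i * (ev Q (ξ i) t * ev (pderiv 0 Q) (ξ i) t) =
      (ev Q 1 t ^ 2 - ev Q (-1) t ^ 2) / 2 := by
  simpa only [derivative_slice, eval_slice_zero] using
    sum_mul_derivative_of_quadratureExact hquad ((natDegree_slice_le 0 t Q).trans hQ.1)

theorem dVol_summation_by_parts (hquad : QuadratureExact (2 * p - 1) ξ w)
    (ν : ℝ) {Q : MvPolynomial (Fin 2) ℝ} (hQ : Q ∈ Vp p) :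
    dVol ξ w (fun x t => ev Q x t * (ev (pderiv 1 Q) x t + ν * ev (pderiv 0 Q) x t)) =
      (wNormSq w (fun i => ev Q (ξ i) 1) - wNormSq w (fun i => ev Q (ξ i) (-1))) / 2 +
        ν * (wNormSq w (fun j => ev Q 1 (ξ j)) - wNormSq w (fun j => ev Q (-1) (ξ j))) / 2 := by
  calc _ = ∑ i, w i * ∑ j, w j * (ev Q (ξ i) (ξ j) * ev (pderiv 1 Q) (ξ i) (ξ j)) +
        ν * ∑ j, w j * ∑ i, w i * (ev Q (ξ i) (ξ j) * ev (pderiv 0 Q) (ξ i) (ξ j)) := by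
        simp only [Finset.mul_sum]
        rw [Finset.sum_comm (s := Finset.univ) (t := Finset.univ)
          (f := fun j i => ν * (w j * (w i * (ev Q (ξ i) (ξ j) * ev (pderiv 0 Q) (ξ i) (ξ j)))))]
        simp only [dVol, ← Finset.sum_add_distrib]
        exact Finset.sum_congr rfl fun i _ => Finset.sum_congr rfl fun j _ => by ring
    _ = _ := by
        simp only [sum_mul_pderiv_time hquad hQ, sum_mul_pderiv_space hquad hQ, wNormSq,
          Finset.mul_sum, Finset.sum_div, ← Finset.sum_sub_distrib]
        congr 1
        · exact Finset.sum_congr rfl fun i _ => by ring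
        · exact Finset.sum_congr rfl fun j _ => by ring

theorem CorrectorEq.energy_identity {g a b : Polynomial ℝ} {q : MvPolynomial (Fin 2) ℝ}
    (hquad : QuadratureExact (2 * p - 1) ξ w) (hq : q ∈ Vp p) (h : CorrectorEq ξ w ν g a b q) :
    wNormSq w (fun i => ev q (ξ i) 1) + wNormSq w (fun i => ev q (ξ i) (-1) - g.eval (ξ i)) +
        ν * wNormSq w (fun j => ev q (-1) (ξ j) - a.eval (ξ j)) -
        ν * wNormSq w (fun j => ev q 1 (ξ j) - b.eval (ξ j)) =
      wNormSq w (fun i => g.eval (ξ i)) + ν * wNormSq w (fun j => a.eval (ξ j)) -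
        ν * wNormSq w (fun j => b.eval (ξ j)) := by
  have h0 := h q hq
  rw [dVol_summation_by_parts hquad ν hq] at h0
  simp only [wNormSq, dT, dX, Finset.mul_sum, Finset.sum_div, ← Finset.sum_add_distrib,
    ← Finset.sum_sub_distrib] at h0 ⊢
  rw [← sub_eq_zero, ← Finset.sum_sub_distrib, ← mul_zero 2, ← h0, Finset.mul_sum]
  exact Finset.sum_congr rfl fun i _ => by ring

theorem CorrectorEq.sub_predictor {g a : Polynomial ℝ} {q qt : MvPolynomial (Fin 2) ℝ}
    (hC : CorrectorEq ξ w ν g a (traceRight qt) q) (hP : PredictorEq ξ w ν g qt) :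
    CorrectorEq ξ w ν 0 (a - slice 1 (-1) qt) 0 (q - qt) := by
  intro φ hφ
  have hCφ := hC φ hφ
  have hPφ := hP φ hφ
  simp only [dVol, dT, dX, ev_sub, map_sub, Polynomial.eval_sub, Polynomial.eval_zero,
    eval_traceRight, eval_slice_one, mul_sub, mul_add, sub_zero, zero_sub, mul_neg,
    Finset.sum_sub_distrib, Finset.sum_add_distrib, Finset.sum_neg_distrib] at hCφ hPφ ⊢
  linarith

theorem energy_balance_of_predictor_corrector {g a : Polynomial ℝ}
    {qt q : MvPolynomial (Fin 2) ℝ} (hquad : QuadratureExact (2 * p - 1) ξ w)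
    (hqt : qt ∈ Vp p) (hq : q ∈ Vp p) (hP : PredictorEq ξ w ν g qt)
    (hinit : ∀ x, ev qt x (-1) = g.eval x) (hC : CorrectorEq ξ w ν g a (traceRight qt) q) :
    wNormSq w (fun i => ev q (ξ i) 1) =
      wNormSq w (fun i => g.eval (ξ i)) +
        ν * (wNormSq w (fun j => a.eval (ξ j)) - wNormSq w (fun j => (traceRight qt).eval (ξ j))) +
        (wNormSq w (fun i => ev (q - qt) (ξ i) 1) -
          ν * wNormSq w (fun j => a.eval (ξ j) - ev qt (-1) (ξ j))) := by
  have hq_energy := hC.energy_identity hquad hq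
  have hψ_energy := (hC.sub_predictor hP).energy_identity hquad (sub_mem_Vp hq hqt)
  have hbottom : (fun i => ev (q - qt) (ξ i) (-1) - (0 : Polynomial ℝ).eval (ξ i)) =
      fun i => ev q (ξ i) (-1) - g.eval (ξ i) := by
    funext i
    rw [ev_sub, hinit, Polynomial.eval_zero, sub_zero]
  have hleft : (fun j => ev (q - qt) (-1) (ξ j) - (a - slice 1 (-1) qt).eval (ξ j)) =
      fun j => ev q (-1) (ξ j) - a.eval (ξ j) := by
    funext j
    rw [ev_sub, Polynomial.eval_sub, eval_slice_one]
    ring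
  have hright : (fun j => ev (q - qt) 1 (ξ j) - (0 : Polynomial ℝ).eval (ξ j)) =
      fun j => ev q 1 (ξ j) - (traceRight qt).eval (ξ j) := by
    funext j
    rw [ev_sub, eval_traceRight, Polynomial.eval_zero, sub_zero]
  have hinflow : (fun j => (a - slice 1 (-1) qt).eval (ξ j)) =
      fun j => a.eval (ξ j) - ev qt (-1) (ξ j) := by
    funext j
    rw [Polynomial.eval_sub, eval_slice_one]
  have hzero : wNormSq w (fun i => (0 : Polynomial ℝ).eval (ξ i)) = 0 := by
    simp [wNormSq]
  rw [hbottom, hleft, hright, hinflow, hzero] at hψ_energy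
  linarith

end SpaceTime

theorem scheme_stability_general
    (p : ℕ)
    (ξ w : Fin (p + 1) → ℝ)
    (hw : ∀ i, 0 < w i)
    (hquad : ∀ f : Polynomial ℝ, f.natDegree ≤ 2 * p - 1 →
      ∑ i, w i * f.eval (ξ i) = ∫ x in (-1 : ℝ)..1, f.eval x)
    (K : ℕ) [NeZero K]
    (ν : ℝ) (hν0 : 0 ≤ ν) (hν1 : ν ≤ 1)
    (g : ZMod K → Polynomial ℝ)
    (qt : ZMod K → MvPolynomial (Fin 2) ℝ) (hqtV : ∀ k, qt k ∈ Vp p)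
    (hpred : ∀ k, PredictorEq ξ w ν (g k) (qt k))
    (hinit : ∀ k, ∀ x : ℝ, ev (qt k) x (-1) = (g k).eval x)
    (q : ZMod K → MvPolynomial (Fin 2) ℝ) (hqV : ∀ k, q k ∈ Vp p)
    (hcor : ∀ k, CorrectorEq ξ w ν (g k) (traceRight (qt (k - 1))) (traceRight (qt k)) (q k))
    (A : (Fin (p + 1) → ℝ) →ₗ[ℝ] (Fin (p + 1) → ℝ))
    (hγβ : ∀ k : ZMod K,
      (fun i => ev (q k - qt k) (ξ i) 1) =
        ν • A (fun j => ev (qt (k - 1)) 1 (ξ j) - ev (qt k) (-1) (ξ j)))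
    (hAnorm : ∀ v : Fin (p + 1) → ℝ,
      Real.sqrt (∑ i, w i * (A v i) ^ 2) ≤ Real.sqrt (∑ i, w i * (v i) ^ 2)) :
    ∑ k : ZMod K, ∑ i, w i * (1 / 2 * (ev (q k) (ξ i) 1) ^ 2)
      ≤ ∑ k : ZMod K, ∑ i, w i * (1 / 2 * ((g k).eval (ξ i)) ^ 2) := by
  have hw' : ∀ i, 0 ≤ w i := fun i => (hw i).le
  have hA : ∀ v, wNormSq w (A v) ≤ wNormSq w v := fun v =>
    (Real.sqrt_le_sqrt_iff (wNormSq_nonneg hw' v)).1 (hAnorm v)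
  have hdissipation : ∀ k, wNormSq w (fun i => ev (q k - qt k) (ξ i) 1) ≤
      ν * wNormSq w (fun j => (traceRight (qt (k - 1))).eval (ξ j) - ev (qt k) (-1) (ξ j)) := by
    intro k
    simp only [hγβ k, eval_traceRight]
    exact wNormSq_smul_le hw' (hA _) hν0 hν1
  have hflux : ∑ k, wNormSq w (fun j => (traceRight (qt (k - 1))).eval (ξ j)) =
      ∑ k, wNormSq w (fun j => (traceRight (qt k)).eval (ξ j)) :=
    Equiv.sum_comp (Equiv.subRight 1) fun k => wNormSq w fun j => (traceRight (qt k)).eval (ξ j)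
  simp only [← wNormSq_div_two, ← Finset.sum_div]
  gcongr ?_ / 2
  calc ∑ k, wNormSq w (fun i => ev (q k) (ξ i) 1)
      ≤ ∑ k, (wNormSq w (fun i => (g k).eval (ξ i)) +
          ν * (wNormSq w (fun j => (traceRight (qt (k - 1))).eval (ξ j)) -
            wNormSq w (fun j => (traceRight (qt k)).eval (ξ j)))) := by
        gcongr with k
        linarith [hdissipation k, energy_balance_of_predictor_corrector hquad (hqtV k) (hqV k)
          (hpred k) (hinit k) (hcor k)]
    _ = ∑ k, wNormSq w (fun i => (g k).eval (ξ i)) := by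
        rw [Finset.sum_add_distrib, ← Finset.mul_sum, Finset.sum_sub_distrib, hflux, sub_self,
          mul_zero, add_zero]

/-- Theorem 4.2: stability of the 1D locally implicit ADER-DG scheme.
Consider the periodic 1D scheme with `K ≥ 1` elements, CFL number `0 ≤ ν ≤ 1`,
previous-step data `g k`, predictors `q̃ k` and correctors `q k`; assume each predictor
matches the previous solution at the beginning of the time step.  With
`ψ k := q k − q̃ k`, define `γ k ∈ ℝ^{p+1}` by `(γ k) i = (ψ k)(ξ i, 1)` and
`β k ∈ ℝ^{p+1}` by `(β k) j = (q̃ (k−1))(1, ξ j) − (q̃ k)(−1, ξ j)`.  Suppose there is a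
linear map `A : ℝ^{p+1} → ℝ^{p+1}` such that `γ k = ν • A (β k)` for every `k`, and
`‖A v‖_w ≤ ‖v‖_w` for all `v`, where `‖v‖_w = √(∑ i, w i * v i ²)`.  Then the scheme is
numerically stable: the total discrete energy does not increase over the time step,
`∑ k ∑ i w i ½ (q k)(ξ i, 1)² ≤ ∑ k ∑ i w i ½ (g k)(ξ i)²`. -/
theorem scheme_stability
    (p : ℕ) (hp : 1 ≤ p)
    (ξ w : Fin (p + 1) → ℝ)
    (hmono : StrictMono ξ)
    (hξ0 : ξ 0 = -1) (hξlast : ξ (Fin.last p) = 1)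
    (hw : ∀ i, 0 < w i)
    (hquad : ∀ f : Polynomial ℝ, f.natDegree ≤ 2 * p - 1 →
      ∑ i, w i * f.eval (ξ i) = ∫ x in (-1 : ℝ)..1, f.eval x)
    (K : ℕ) (hK : 1 ≤ K) [NeZero K]
    (ν : ℝ) (hν0 : 0 ≤ ν) (hν1 : ν ≤ 1)
    (g : ZMod K → Polynomial ℝ) (hg : ∀ k, (g k).natDegree ≤ p)
    (qt : ZMod K → MvPolynomial (Fin 2) ℝ) (hqtV : ∀ k, qt k ∈ Vp p)
    (hpred : ∀ k, PredictorEq ξ w ν (g k) (qt k))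
    (hinit : ∀ k, ∀ x : ℝ, ev (qt k) x (-1) = (g k).eval x)
    (q : ZMod K → MvPolynomial (Fin 2) ℝ) (hqV : ∀ k, q k ∈ Vp p)
    (hcor : ∀ k, CorrectorEq ξ w ν (g k) (traceRight (qt (k - 1))) (traceRight (qt k)) (q k))
    (A : (Fin (p + 1) → ℝ) →ₗ[ℝ] (Fin (p + 1) → ℝ))
    (hγβ : ∀ k : ZMod K,
      (fun i => ev (q k - qt k) (ξ i) 1) =
        ν • A (fun j => ev (qt (k - 1)) 1 (ξ j) - ev (qt k) (-1) (ξ j)))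
    (hAnorm : ∀ v : Fin (p + 1) → ℝ,
      Real.sqrt (∑ i, w i * (A v i) ^ 2) ≤ Real.sqrt (∑ i, w i * (v i) ^ 2)) :
    ∑ k : ZMod K, ∑ i, w i * (1 / 2 * (ev (q k) (ξ i) 1) ^ 2)
      ≤ ∑ k : ZMod K, ∑ i, w i * (1 / 2 * ((g k).eval (ξ i)) ^ 2) :=
  scheme_stability_general p ξ w hw hquad K ν hν0 hν1 g qt hqtV hpred hinit q hqV hcor A hγβ hAnorm
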